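/- Let k ≥ 1 be an integer and let w be a real number. Then the sets S' = {ξ ∈ ℝ : ω_k(ξ) > w} and S'^lead = {ξ ∈ ℝ : ω_k^lead(ξ) > w} have the same Hausdorff dimension. -/

import Mathlib

open Polynomial Filter

/-- The height (maximum absolute value of coefficients) of an integer polynomial,
as a real number. -/
noncomputable def intPolyNorm (P : Polynomial ℤ) : ℝ :=
  ((P.support.sup fun i => (P.coeff i).natAbs : ℕ) : ℝ)

/-- The height (maximum absolute value of coefficients) of a real polynomial. -/
noncomputable def realPolyNorm (P : Polynomial ℝ) : ℝ :=
  (Finset.range (P.natDegree + 1)).sup' Finset.nonempty_range_add_one fun i => |P.coeff i|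

/-- The maximum norm of an integer vector, as a real number. -/
noncomputable def vecNorm {n : ℕ} (x : Fin (n + 1) → ℤ) : ℝ :=
  ((Finset.univ.sup fun i => (x i).natAbs : ℕ) : ℝ)

/-- The exponent `ω_n(ξ)`: the supremum (in `EReal`) of all `ω ∈ ℝ` for which there are
infinitely many nonzero `P ∈ ℤ[x]` with `deg P ≤ n` and `|P(ξ)| ≤ ‖P‖ ^ (-ω)`. -/
noncomputable def omegaExp (n : ℕ) (ξ : ℝ) : EReal :=
  sSup (Real.toEReal '' {ω : ℝ |
    {P : Polynomial ℤ | P ≠ 0 ∧ P.natDegree ≤ n ∧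
      |Polynomial.aeval ξ P| ≤ intPolyNorm P ^ (-ω)}.Infinite})

/-- The exponent `ω_n^lead(ξ)`: as `ω_n(ξ)`, but restricted to polynomials whose
coefficient of `x^n` has absolute value equal to the height. -/
noncomputable def omegaLeadExp (n : ℕ) (ξ : ℝ) : EReal :=
  sSup (Real.toEReal '' {ω : ℝ |
    {P : Polynomial ℤ | P ≠ 0 ∧ P.natDegree ≤ n ∧
      ((P.coeff n).natAbs : ℝ) = intPolyNorm P ∧
      |Polynomial.aeval ξ P| ≤ intPolyNorm P ^ (-ω)}.Infinite})

/-- The exponent `λ_n(ξ)`: the supremum (in `EReal`) of all `λ ∈ ℝ` for which there are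
infinitely many nonzero `x = (x_0, …, x_n) ∈ ℤ^{n+1}` with
`max_{1 ≤ m ≤ n} |x_0 ξ^m − x_m| ≤ ‖x‖ ^ (−λ)`. -/
noncomputable def lambdaExp (n : ℕ) (ξ : ℝ) : EReal :=
  sSup (Real.toEReal '' {l : ℝ |
    {x : Fin (n + 1) → ℤ | x ≠ 0 ∧ ∀ m : Fin (n + 1), 1 ≤ (m : ℕ) →
      |(x 0 : ℝ) * ξ ^ (m : ℕ) - (x m : ℝ)| ≤ vecNorm x ^ (-l)}.Infinite})

/-- The polynomial `Q(x) = (Mx)^k · P(1/(Mx) + r)`, i.e. `∑_{j=0}^{k} a_j M^{k−j} x^{k−j}`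
where `P(x + r) = ∑_j a_j x^j`. -/
noncomputable def Qpoly (k : ℕ) (M : ℤ) (r : ℤ) (P : Polynomial ℤ) : Polynomial ℤ :=
  ∑ j ∈ Finset.range (k + 1),
    Polynomial.C ((P.comp (Polynomial.X + Polynomial.C r)).coeff j * M ^ (k - j)) *
      Polynomial.X ^ (k - j)

/-!
Since `ω_k^lead ≤ ω_k`, only `dimH S' ≤ dimH S'^lead` needs an argument. Take `ξ` with
`ω_k(ξ) > ω > w`. Lagrange interpolation at the `k + 1` integers `⌊ξ⌋ - 1 - i` shows that every
`P` of degree at most `k` satisfies `‖P‖ ≪ |P(r)|` at one of them, so infinitely many good `P`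
share the same node `r`, with `ξ - r ≥ 1`. For a large integer `M`, the coefficients of
`Q = Qpoly k M r P` are `a_{k-i} M^i` with `a_j` the Taylor coefficients of `P` at `r`, hence the
`x^k`-coefficient `P(r) M^k` is the largest one, `‖Q‖ ≍ ‖P‖`, and `|Q(ζ)| ≤ |P(ξ)|` at
`ζ = 1 / (M (ξ - r))`. Giving up an arbitrarily small amount of the exponent to absorb the
constants, `ω_k^lead(ζ) > w`. Thus `S'` is covered by countably many images of
`S'^lead ∩ (0, ∞)` under the smooth maps `ζ ↦ r + 1 / (M ζ)`, which do not raise Hausdorff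
dimension.
-/

lemma abs_coeff_le_intPolyNorm (P : ℤ[X]) (i : ℕ) : |(P.coeff i : ℝ)| ≤ intPolyNorm P := by
  rw [← Int.cast_abs, ← Nat.cast_natAbs, intPolyNorm, Nat.cast_le]
  by_cases hi : i ∈ P.support
  · exact Finset.le_sup (f := fun j => (P.coeff j).natAbs) hi
  · simp [notMem_support_iff.1 hi]

lemma exists_abs_coeff_eq_intPolyNorm (P : ℤ[X]) : ∃ m, |(P.coeff m : ℝ)| = intPolyNorm P := by
  rcases P.support.eq_empty_or_nonempty with h | h
  · exact ⟨0, by simp [intPolyNorm, support_eq_empty.1 h]⟩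
  · obtain ⟨m, -, hm⟩ := Finset.exists_mem_eq_sup P.support h fun j => (P.coeff j).natAbs
    exact ⟨m, by rw [intPolyNorm, hm, Nat.cast_natAbs, Int.cast_abs]⟩

lemma intPolyNorm_eq_of_forall_abs_coeff_le {P : ℤ[X]} {m : ℕ}
    (h : ∀ i, |P.coeff i| ≤ |P.coeff m|) : intPolyNorm P = |(P.coeff m : ℝ)| := by
  obtain ⟨i, hi⟩ := exists_abs_coeff_eq_intPolyNorm P
  refine le_antisymm ?_ (abs_coeff_le_intPolyNorm P m)
  rw [← hi, ← Int.cast_abs, ← Int.cast_abs]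
  exact_mod_cast h i

lemma one_le_intPolyNorm {P : ℤ[X]} (hP : P ≠ 0) : 1 ≤ intPolyNorm P := by
  obtain ⟨i, hi⟩ := support_nonempty.2 hP
  refine le_trans ?_ (abs_coeff_le_intPolyNorm P i)
  rw [← Int.cast_abs]
  exact_mod_cast Int.one_le_abs (mem_support_iff.1 hi)

lemma finite_setOf_natDegree_le_intPolyNorm_le (k : ℕ) (T : ℝ) :
    {P : ℤ[X] | P.natDegree ≤ k ∧ intPolyNorm P ≤ T}.Finite := by
  obtain ⟨n, hn⟩ := exists_nat_ge T
  refine Set.Finite.of_finite_image (f := fun P (i : Fin (k + 1)) => P.coeff i) ?_ ?_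
  · refine (Set.Finite.pi fun _ => Set.finite_Icc (-n : ℤ) n).subset ?_
    rintro _ ⟨P, ⟨-, hP⟩, rfl⟩ i -
    rw [Set.mem_Icc, ← abs_le, ← Int.cast_le (R := ℝ), Int.cast_abs, Int.cast_natCast]
    exact (abs_coeff_le_intPolyNorm P i).trans (hP.trans hn)
  · intro P hP Q hQ hPQ
    ext i
    rcases le_or_gt i k with hi | hi
    · exact congr_fun hPQ ⟨i, Nat.lt_succ_of_le hi⟩
    · rw [coeff_eq_zero_of_natDegree_lt (hP.1.trans_lt hi),
        coeff_eq_zero_of_natDegree_lt (hQ.1.trans_lt hi)]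

lemma abs_map_le_intPolyNorm_mul (ℓ : ℤ[X] →+ ℤ) {P : ℤ[X]} {k : ℕ} (hP : P.natDegree ≤ k) :
    |(ℓ P : ℝ)| ≤ intPolyNorm P * ∑ i ∈ Finset.range (k + 1), |(ℓ (X ^ i) : ℝ)| := by
  have hℓ : (ℓ P : ℝ) = ∑ i ∈ Finset.range (k + 1), (P.coeff i : ℝ) * ℓ (X ^ i) := by
    conv_lhs => rw [P.as_sum_range' (k + 1) (Nat.lt_succ_of_le hP)]
    simp [← C_mul_X_pow_eq_monomial, ← zsmul_eq_mul]
  rw [hℓ, Finset.mul_sum]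
  refine (Finset.abs_sum_le_sum_abs _ _).trans (Finset.sum_le_sum fun i _ => ?_)
  rw [abs_mul]
  exact mul_le_mul_of_nonneg_right (abs_coeff_le_intPolyNorm P i) (abs_nonneg _)

lemma exists_abs_taylor_coeff_le (k : ℕ) (r : ℤ) :
    ∃ C : ℝ, 0 ≤ C ∧ ∀ P : ℤ[X], P.natDegree ≤ k → ∀ j ≤ k,
      |((taylor r P).coeff j : ℝ)| ≤ C * intPolyNorm P := by
  refine ⟨∑ j ∈ Finset.range (k + 1), ∑ i ∈ Finset.range (k + 1),
    |((taylor r (X ^ i)).coeff j : ℝ)|, by positivity, fun P hP j hj => ?_⟩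
  calc |((taylor r P).coeff j : ℝ)|
      ≤ intPolyNorm P * ∑ i ∈ Finset.range (k + 1), |((taylor r (X ^ i)).coeff j : ℝ)| :=
        abs_map_le_intPolyNorm_mul ((lcoeff ℤ j).comp (taylor r)).toAddMonoidHom hP
    _ ≤ _ := by
      rw [mul_comm]
      refine mul_le_mul_of_nonneg_right ?_ ((abs_nonneg _).trans (abs_coeff_le_intPolyNorm P 0))
      exact Finset.single_le_sum (f := fun j => ∑ i ∈ Finset.range (k + 1),
        |((taylor r (X ^ i)).coeff j : ℝ)|) (fun _ _ => by positivity)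
        (Finset.mem_range.2 (Nat.lt_succ_of_le hj))

lemma abs_coeff_le_sum_abs_eval_mul {ι : Type*} [DecidableEq ι] {s : Finset ι} {v : ι → ℝ}
    (hvs : Set.InjOn v s) {f : ℝ[X]} (hf : f.degree < s.card) (j : ℕ) :
    |f.coeff j| ≤ ∑ i ∈ s, |f.eval (v i)| * |(Lagrange.basis s v i).coeff j| := by
  conv_lhs => rw [Lagrange.eq_interpolate hvs hf, Lagrange.interpolate_apply, finsetSum_coeff]
  simp_rw [coeff_C_mul, ← abs_mul]
  exact Finset.abs_sum_le_sum_abs _ _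

lemma exists_intPolyNorm_le_mul_abs_eval {k : ℕ} {t : Fin (k + 1) → ℤ}
    (ht : Function.Injective t) :
    ∃ C : ℝ, ∀ P : ℤ[X], P.natDegree ≤ k → ∃ i, intPolyNorm P ≤ C * |((P.eval (t i) : ℤ) : ℝ)| := by
  set v : Fin (k + 1) → ℝ := fun i => t i
  have hv : Set.InjOn v ↑(Finset.univ : Finset (Fin (k + 1))) := (Int.cast_injective.comp ht).injOn
  set C : ℝ := ∑ m ∈ Finset.range (k + 1), ∑ i, |(Lagrange.basis Finset.univ v i).coeff m|
  refine ⟨C, fun P hP => ?_⟩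
  obtain ⟨i₀, -, hi₀⟩ := Finset.exists_max_image Finset.univ (fun i => |((P.eval (t i) : ℤ) : ℝ)|)
    Finset.univ_nonempty
  refine ⟨i₀, ?_⟩
  obtain ⟨m, hm⟩ := exists_abs_coeff_eq_intPolyNorm P
  rw [← hm]
  rcases lt_or_ge k m with hmk | hmk
  · rw [coeff_eq_zero_of_natDegree_lt (hP.trans_lt hmk)]
    simp only [Int.cast_zero, abs_zero]
    positivity
  set f : ℝ[X] := P.map (Int.castRingHom ℝ)
  have hf : f.degree < (Finset.univ : Finset (Fin (k + 1))).card := by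
    rw [Finset.card_univ, Fintype.card_fin]
    exact (degree_map_le.trans (degree_le_of_natDegree_le hP)).trans_lt
      (by exact_mod_cast Nat.lt_succ_self k)
  calc |(P.coeff m : ℝ)| = |f.coeff m| := by rw [coeff_map, eq_intCast]
    _ ≤ ∑ i, |f.eval (v i)| * |(Lagrange.basis Finset.univ v i).coeff m| :=
      abs_coeff_le_sum_abs_eval_mul hv hf m
    _ ≤ ∑ i, |((P.eval (t i₀) : ℤ) : ℝ)| * |(Lagrange.basis Finset.univ v i).coeff m| := by
      refine Finset.sum_le_sum fun i _ => mul_le_mul_of_nonneg_right ?_ (abs_nonneg _)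
      simpa [f, v, eval_map] using hi₀ i (Finset.mem_univ i)
    _ ≤ C * |((P.eval (t i₀) : ℤ) : ℝ)| := by
      rw [← Finset.mul_sum, mul_comm]
      refine mul_le_mul_of_nonneg_right ?_ (abs_nonneg _)
      exact Finset.single_le_sum (f := fun m => ∑ i, |(Lagrange.basis Finset.univ v i).coeff m|)
        (fun _ _ => by positivity) (Finset.mem_range.2 (Nat.lt_succ_of_le hmk))

lemma Set.Infinite.exists_infinite_intPolyNorm_le_mul_abs_eval {k : ℕ} {S : Set ℤ[X]}
    (hS : S.Infinite) (hdeg : ∀ P ∈ S, P.natDegree ≤ k) {t : Fin (k + 1) → ℤ}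
    (ht : Function.Injective t) :
    ∃ C : ℝ, ∃ i, {P ∈ S | intPolyNorm P ≤ C * |((P.eval (t i) : ℤ) : ℝ)|}.Infinite := by
  obtain ⟨C, hC⟩ := exists_intPolyNorm_le_mul_abs_eval ht
  refine ⟨C, ?_⟩
  by_contra! hfin
  refine hS ((Set.finite_iUnion hfin).subset fun P hP => ?_)
  obtain ⟨i, hi⟩ := hC P (hdeg P hP)
  exact Set.mem_iUnion.2 ⟨i, hP, hi⟩

lemma Qpoly_eq_sum_taylor (k : ℕ) (M r : ℤ) (P : ℤ[X]) :
    Qpoly k M r P =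
      ∑ j ∈ Finset.range (k + 1), C ((taylor r P).coeff j * M ^ (k - j)) * X ^ (k - j) :=
  rfl

lemma Qpoly_coeff_of_le {k i : ℕ} (M r : ℤ) (P : ℤ[X]) (hi : i ≤ k) :
    (Qpoly k M r P).coeff i = (taylor r P).coeff (k - i) * M ^ i := by
  rw [Qpoly_eq_sum_taylor, finsetSum_coeff,
    Finset.sum_eq_single_of_mem (k - i) (Finset.mem_range.2 (by omega))]
  · rw [coeff_C_mul, coeff_X_pow, Nat.sub_sub_self hi, if_pos rfl, mul_one]
  · intro j hj hji
    rw [coeff_C_mul, coeff_X_pow, if_neg (by have := Finset.mem_range.1 hj; omega), mul_zero]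

lemma Qpoly_coeff_of_lt {k i : ℕ} (M r : ℤ) (P : ℤ[X]) (hi : k < i) :
    (Qpoly k M r P).coeff i = 0 := by
  rw [Qpoly_eq_sum_taylor, finsetSum_coeff]
  exact Finset.sum_eq_zero fun j _ => by rw [coeff_C_mul, coeff_X_pow, if_neg (by omega), mul_zero]

lemma natDegree_Qpoly_le (k : ℕ) (M r : ℤ) (P : ℤ[X]) : (Qpoly k M r P).natDegree ≤ k :=
  natDegree_le_iff_coeff_eq_zero.2 fun _ hi => Qpoly_coeff_of_lt M r P hi

lemma Qpoly_injOn (k : ℕ) {M : ℤ} (hM : M ≠ 0) (r : ℤ) :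
    Set.InjOn (Qpoly k M r) {P | P.natDegree ≤ k} := by
  intro P hP Q hQ hPQ
  refine taylor_injective r (Polynomial.ext fun j => ?_)
  rcases le_or_gt j k with hj | hj
  · have h := congr_arg (coeff · (k - j)) hPQ
    simp only [Qpoly_coeff_of_le M r _ (Nat.sub_le k j), Nat.sub_sub_self hj] at h
    exact mul_right_cancel₀ (pow_ne_zero _ hM) h
  · rw [coeff_eq_zero_of_natDegree_lt (by rw [natDegree_taylor]; exact hP.trans_lt hj),
      coeff_eq_zero_of_natDegree_lt (by rw [natDegree_taylor]; exact hQ.trans_lt hj)]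

lemma aeval_Qpoly {k : ℕ} (M r : ℤ) {P : ℤ[X]} (hP : P.natDegree ≤ k) {ζ : ℝ}
    (hζ : (M : ℝ) * ζ ≠ 0) :
    aeval ζ (Qpoly k M r P) = ((M : ℝ) * ζ) ^ k * aeval (r + ((M : ℝ) * ζ)⁻¹) P := by
  have hP' : P = (taylor r P).comp (X - C r) := by rw [taylor_apply, comp_assoc]; simp
  have hdeg : (taylor r P).natDegree < k + 1 := by rw [natDegree_taylor]; omega
  conv_rhs => rw [hP', aeval_comp]
  rw [aeval_eq_sum_range' hdeg, Qpoly_eq_sum_taylor, map_sum, Finset.mul_sum]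
  refine Finset.sum_congr rfl fun j hj => ?_
  have hjk : j ≤ k := Nat.lt_succ_iff.1 (Finset.mem_range.1 hj)
  simp only [map_mul, map_pow, aeval_X, eq_intCast, map_intCast, map_sub, zsmul_eq_mul,
    add_sub_cancel_left, inv_pow]
  rw [mul_assoc, ← mul_pow, pow_sub₀ _ hζ hjk]
  ring

lemma Qpoly_coeff_self (k : ℕ) (M r : ℤ) (P : ℤ[X]) :
    (Qpoly k M r P).coeff k = P.eval r * M ^ k := by
  rw [Qpoly_coeff_of_le M r P le_rfl, Nat.sub_self, taylor_coeff_zero]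

lemma abs_Qpoly_coeff_le_coeff_self {k : ℕ} {M r : ℤ} {P : ℤ[X]} (hM : 1 ≤ M)
    (hdom : ∀ j ≤ k, |(taylor r P).coeff j| ≤ M * |P.eval r|) (i : ℕ) :
    |(Qpoly k M r P).coeff i| ≤ |(Qpoly k M r P).coeff k| := by
  rcases lt_trichotomy i k with hi | rfl | hi
  · simp only [Qpoly_coeff_self, Qpoly_coeff_of_le M r P hi.le, abs_mul, abs_pow,
      abs_of_pos (by omega : 0 < M)]
    calc |(taylor r P).coeff (k - i)| * M ^ i ≤ M * |P.eval r| * M ^ i := by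
          gcongr; exact hdom _ (Nat.sub_le k i)
      _ = |P.eval r| * M ^ (i + 1) := by ring
      _ ≤ |P.eval r| * M ^ k := mul_le_mul_of_nonneg_left (pow_le_pow_right₀ hM hi) (abs_nonneg _)
  · exact le_rfl
  · simp [Qpoly_coeff_of_lt M r P hi]

lemma natAbs_Qpoly_coeff_self_eq_intPolyNorm {k : ℕ} {M r : ℤ} {P : ℤ[X]} (hM : 1 ≤ M)
    (hdom : ∀ j ≤ k, |(taylor r P).coeff j| ≤ M * |P.eval r|) :
    (((Qpoly k M r P).coeff k).natAbs : ℝ) = intPolyNorm (Qpoly k M r P) := by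
  rw [intPolyNorm_eq_of_forall_abs_coeff_le (abs_Qpoly_coeff_le_coeff_self hM hdom),
    Nat.cast_natAbs, Int.cast_abs]

lemma intPolyNorm_Qpoly {k : ℕ} {M r : ℤ} {P : ℤ[X]} (hM : 1 ≤ M)
    (hdom : ∀ j ≤ k, |(taylor r P).coeff j| ≤ M * |P.eval r|) :
    intPolyNorm (Qpoly k M r P) = |((P.eval r : ℤ) : ℝ)| * M ^ k := by
  rw [← natAbs_Qpoly_coeff_self_eq_intPolyNorm hM hdom, Nat.cast_natAbs, Qpoly_coeff_self,
    Int.cast_abs, Int.cast_mul, Int.cast_pow, abs_mul, abs_pow,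
    abs_of_pos (by exact_mod_cast hM : (0 : ℝ) < M)]

lemma abs_aeval_Qpoly_le {k : ℕ} {M r : ℤ} {P : ℤ[X]} {ξ : ℝ} (hM : 1 ≤ M)
    (hP : P.natDegree ≤ k) (hξr : 1 ≤ ξ - r) :
    |aeval ((M * (ξ - r))⁻¹ : ℝ) (Qpoly k M r P)| ≤ |aeval ξ P| := by
  have hM' : (1 : ℝ) ≤ M := by exact_mod_cast hM
  have hMζ : (M : ℝ) * (M * (ξ - r))⁻¹ = (ξ - r)⁻¹ := by field_simp
  rw [aeval_Qpoly M r hP (by rw [hMζ]; positivity), hMζ, inv_inv, add_sub_cancel, abs_mul]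
  refine mul_le_of_le_one_left (abs_nonneg _) ?_
  rw [abs_pow, abs_inv, abs_of_pos (by linarith)]
  exact pow_le_one₀ (by positivity) (inv_le_one_of_one_le₀ hξr)

lemma rpow_neg_le_rpow_neg_of_le_mul {ω ω' K x y : ℝ} (hω : ω' < ω) (hx : 0 < x) (hy : 0 < y)
    (hxy : x ≤ K * y) (hyx : y ≤ K * x) (hlarge : Real.exp (|ω'| * Real.log K / (ω - ω')) ≤ x) :
    x ^ (-ω) ≤ y ^ (-ω') := by
  have hK : 0 < K := pos_of_mul_pos_left (hx.trans_le hxy) hy.le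
  have hlog : |Real.log y - Real.log x| ≤ Real.log K := by
    have h₁ := Real.log_le_log hy hyx
    have h₂ := Real.log_le_log hx hxy
    rw [Real.log_mul hK.ne' hx.ne'] at h₁
    rw [Real.log_mul hK.ne' hy.ne'] at h₂
    rw [abs_sub_le_iff]
    constructor <;> linarith
  have hlarge' : |ω'| * Real.log K ≤ (ω - ω') * Real.log x := by
    rw [← div_le_iff₀' (sub_pos.2 hω)]
    exact (Real.le_log_iff_exp_le hx).2 hlarge
  have hshift : ω' * (Real.log y - Real.log x) ≤ |ω'| * Real.log K := by
    refine (le_abs_self _).trans ?_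
    rw [abs_mul]
    exact mul_le_mul_of_nonneg_left hlog (abs_nonneg _)
  rw [Real.rpow_def_of_pos hx, Real.rpow_def_of_pos hy, Real.exp_le_exp]
  nlinarith

lemma exists_infinite_of_lt_omegaExp {k : ℕ} {w ξ : ℝ} (h : (w : EReal) < omegaExp k ξ) :
    ∃ ω, w < ω ∧ ∃ r : ℤ, 1 ≤ ξ - r ∧ ∃ C : ℝ,
      {P : ℤ[X] | (P ≠ 0 ∧ P.natDegree ≤ k ∧ |aeval ξ P| ≤ intPolyNorm P ^ (-ω)) ∧
        intPolyNorm P ≤ C * |((P.eval r : ℤ) : ℝ)|}.Infinite := by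
  obtain ⟨_, ⟨ω, hω, rfl⟩, hwω⟩ := lt_sSup_iff.1 h
  set t : Fin (k + 1) → ℤ := fun i => ⌊ξ⌋ - 1 - i
  have ht : Function.Injective t := fun i j hij => Fin.ext (by simp only [t] at hij; omega)
  obtain ⟨C, i, hi⟩ := Set.Infinite.exists_infinite_intPolyNorm_le_mul_abs_eval hω
    (fun P hP => hP.2.1) ht
  refine ⟨ω, EReal.coe_lt_coe_iff.1 hwω, t i, ?_, C, hi⟩
  have := Int.floor_le ξ
  simp only [t, Int.cast_sub, Int.cast_one, Int.cast_natCast]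
  linarith [(Nat.cast_nonneg i : (0 : ℝ) ≤ i)]

lemma abs_taylor_coeff_le_mul_abs_eval {k : ℕ} {M r : ℤ} {P : ℤ[X]} {C C₂ : ℝ} (hC₂ : 0 ≤ C₂)
    (hCM : C * C₂ ≤ M) (htaylor : ∀ j ≤ k, |((taylor r P).coeff j : ℝ)| ≤ C₂ * intPolyNorm P)
    (hPr : intPolyNorm P ≤ C * |((P.eval r : ℤ) : ℝ)|) :
    ∀ j ≤ k, |(taylor r P).coeff j| ≤ M * |P.eval r| := by
  intro j hj
  rw [← Int.cast_le (R := ℝ)]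
  push_cast
  calc |((taylor r P).coeff j : ℝ)| ≤ C₂ * intPolyNorm P := htaylor j hj
    _ ≤ C₂ * (C * |((P.eval r : ℤ) : ℝ)|) := mul_le_mul_of_nonneg_left hPr hC₂
    _ = C * C₂ * |((P.eval r : ℤ) : ℝ)| := by ring
    _ ≤ M * |((P.eval r : ℤ) : ℝ)| := mul_le_mul_of_nonneg_right hCM (abs_nonneg _)

lemma Qpoly_lead_approximation {k : ℕ} {M r : ℤ} {P : ℤ[X]} {ξ ω ω' C C₂ : ℝ} (hM : 1 ≤ M)
    (hC₂ : 0 ≤ C₂) (hCM : C * C₂ ≤ M) (hω : ω' < ω) (hξr : 1 ≤ ξ - r)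
    (htaylor : ∀ j ≤ k, |((taylor r P).coeff j : ℝ)| ≤ C₂ * intPolyNorm P)
    (hP0 : P ≠ 0) (hPk : P.natDegree ≤ k) (hPξ : |aeval ξ P| ≤ intPolyNorm P ^ (-ω))
    (hPr : intPolyNorm P ≤ C * |((P.eval r : ℤ) : ℝ)|)
    (hlarge : Real.exp (|ω'| * Real.log (max C (C₂ * M ^ k)) / (ω - ω')) ≤ intPolyNorm P) :
    Qpoly k M r P ≠ 0 ∧ (Qpoly k M r P).natDegree ≤ k ∧
      (((Qpoly k M r P).coeff k).natAbs : ℝ) = intPolyNorm (Qpoly k M r P) ∧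
      |aeval ((M * (ξ - r))⁻¹ : ℝ) (Qpoly k M r P)| ≤ intPolyNorm (Qpoly k M r P) ^ (-ω') := by
  have hMk : (1 : ℝ) ≤ M ^ k := one_le_pow₀ (by exact_mod_cast hM)
  have hP1 := one_le_intPolyNorm hP0
  have ha : 0 < |((P.eval r : ℤ) : ℝ)| := by
    by_contra! h0
    rw [le_antisymm h0 (abs_nonneg _), mul_zero] at hPr
    linarith
  have hdom := abs_taylor_coeff_le_mul_abs_eval hC₂ hCM htaylor hPr
  have hQ := intPolyNorm_Qpoly hM hdom
  have hQpos : 0 < intPolyNorm (Qpoly k M r P) := by rw [hQ]; positivity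
  refine ⟨fun hQ0 => by simp [hQ0, intPolyNorm] at hQpos, natDegree_Qpoly_le k M r P,
    natAbs_Qpoly_coeff_self_eq_intPolyNorm hM hdom, ?_⟩
  refine (abs_aeval_Qpoly_le hM hPk hξr).trans (hPξ.trans ?_)
  refine rpow_neg_le_rpow_neg_of_le_mul hω (by linarith) hQpos ?_ ?_ hlarge
  · rw [hQ]
    calc intPolyNorm P ≤ C * |((P.eval r : ℤ) : ℝ)| := hPr
      _ ≤ max C (C₂ * M ^ k) * |((P.eval r : ℤ) : ℝ)| :=
        mul_le_mul_of_nonneg_right (le_max_left _ _) ha.le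
      _ ≤ max C (C₂ * M ^ k) * (|((P.eval r : ℤ) : ℝ)| * M ^ k) :=
        mul_le_mul_of_nonneg_left (le_mul_of_one_le_right ha.le hMk)
          (le_max_of_le_right (by positivity))
  · have ha' := htaylor 0 (Nat.zero_le k)
    rw [taylor_coeff_zero] at ha'
    rw [hQ]
    calc |((P.eval r : ℤ) : ℝ)| * M ^ k ≤ C₂ * intPolyNorm P * M ^ k := by gcongr
      _ = C₂ * M ^ k * intPolyNorm P := by ring
      _ ≤ max C (C₂ * M ^ k) * intPolyNorm P := by gcongr; exact le_max_right _ _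

lemma exists_lt_omegaLeadExp {k : ℕ} {w ξ : ℝ} (h : (w : EReal) < omegaExp k ξ) :
    ∃ r M : ℤ, 1 ≤ M ∧ 1 ≤ ξ - r ∧ (w : EReal) < omegaLeadExp k ((M * (ξ - r))⁻¹) := by
  obtain ⟨ω, hwω, r, hξr, C, hS⟩ := exists_infinite_of_lt_omegaExp h
  obtain ⟨ω', hwω', hω'ω⟩ := exists_between hwω
  obtain ⟨C₂, hC₂, htaylor⟩ := exists_abs_taylor_coeff_le k r
  obtain ⟨M, hM, hCM⟩ : ∃ M : ℤ, 1 ≤ M ∧ C * C₂ ≤ M :=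
    ⟨max 1 ⌈C * C₂⌉, le_max_left _ _, (Int.le_ceil _).trans (by exact_mod_cast le_max_right _ _)⟩
  refine ⟨r, M, hM, hξr, lt_of_lt_of_le (EReal.coe_lt_coe_iff.2 hwω') (le_sSup ⟨ω', ?_, rfl⟩)⟩
  have hS' := hS.sdiff (finite_setOf_natDegree_le_intPolyNorm_le k
    (Real.exp (|ω'| * Real.log (max C (C₂ * M ^ k)) / (ω - ω'))))
  refine (hS'.image ((Qpoly_injOn k (zero_lt_one.trans_le hM).ne' r).mono
    fun P hP => hP.1.1.2.1)).mono ?_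
  rintro _ ⟨P, ⟨⟨⟨hP0, hPk, hPξ⟩, hPr⟩, hPT⟩, rfl⟩
  exact Qpoly_lead_approximation hM hC₂ hCM hω'ω hξr (htaylor P hPk) hP0 hPk hPξ hPr
    (not_le.1 fun hle => hPT ⟨hPk, hle⟩).le

lemma omegaLeadExp_le_omegaExp (k : ℕ) (ξ : ℝ) : omegaLeadExp k ξ ≤ omegaExp k ξ :=
  sSup_le_sSup (Set.image_mono fun _ hω => hω.mono fun _ hP => ⟨hP.1, hP.2.1, hP.2.2.2⟩)

theorem corollary2_gt_general (k : ℕ) (w : ℝ) :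
    dimH {ξ : ℝ | (w : EReal) < omegaExp k ξ} =
      dimH {ξ : ℝ | (w : EReal) < omegaLeadExp k ξ} := by
  set Slead := {ξ : ℝ | (w : EReal) < omegaLeadExp k ξ}
  refine le_antisymm ?_ (dimH_mono fun ξ hξ => hξ.trans_le (omegaLeadExp_le_omegaExp k ξ))
  have hcover : {ξ : ℝ | (w : EReal) < omegaExp k ξ} ⊆
      ⋃ p : ℤ × ℤ, (fun ζ : ℝ => p.1 + (p.2 : ℝ)⁻¹ * ζ⁻¹) '' (Slead ∩ Set.Ioi 0) := by
    -- `p.2⁻¹ * ζ⁻¹` rather than `(p.2 * ζ)⁻¹`: smooth on `(0, ∞)` even for `p.2 = 0`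
    intro ξ hξ
    obtain ⟨r, M, hM, hξr, hlead⟩ := exists_lt_omegaLeadExp hξ
    have hM' : (0 : ℝ) < M := by exact_mod_cast hM
    refine Set.mem_iUnion.2 ⟨(r, M), _, ⟨hlead, ?_⟩, ?_⟩
    · exact inv_pos.2 (mul_pos hM' (by linarith))
    · field_simp
      ring
  refine (dimH_mono hcover).trans (((dimH_iUnion _).le).trans (iSup_le fun p => ?_))
  refine (ContDiffOn.dimH_image_le ?_ (convex_Ioi 0) Set.inter_subset_right).trans
    (dimH_mono Set.inter_subset_left)
  exact contDiffOn_const.add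
    (contDiffOn_const.mul ((contDiffOn_inv ℝ).mono fun ζ hζ => ne_of_gt hζ))

/-- The sets `{ξ : ω_k(ξ) > w}` and `{ξ : ω_k^lead(ξ) > w}` have the same
Hausdorff dimension. -/
theorem corollary2_gt (k : ℕ) (hk : 1 ≤ k) (w : ℝ) :
    dimH {ξ : ℝ | (w : EReal) < omegaExp k ξ} =
      dimH {ξ : ℝ | (w : EReal) < omegaLeadExp k ξ} :=
  corollary2_gt_general k w
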